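/- arXiv:2403.08627 — 2 statements merged into one kernel-verified Lean document; each statement's English description precedes it below -/
import Mathlib

section
/- (Lemma 2, optimal scalar coefficient) Suppose m_1 < m_2 and Tr(C_{22}) > 0, and let α* = Tr(C_{12}) / Tr(C_{22}). Then α* minimizes the generalized variance of the multifidelity estimator: for every α ∈ ℝ, Tr(Cov[ĝ^{α*}_MF, ĝ^{α*}_MF]) ≤ Tr(Cov[ĝ^α_MF, ĝ^α_MF]). -/
open MeasureTheory
open scoped Matrix

/-- Cross-covariance matrix of two random vectors `V, W : Ω → ℝ^d` under measure `P`: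
`(covMatrix P V W) i j = E[Vᵢ Wⱼ] − E[Vᵢ] E[Wⱼ]`. -/
noncomputable def covMatrix {Ω : Type*} [MeasurableSpace Ω] (P : Measure Ω)
    {d : ℕ} (V W : Ω → Fin d → ℝ) : Matrix (Fin d) (Fin d) ℝ :=
  Matrix.of fun i j =>
    (∫ ω, V ω i * W ω j ∂P) - (∫ ω, V ω i ∂P) * (∫ ω, W ω j ∂P)

/-- Scalar-coefficient vector-valued bi-fidelity Monte Carlo estimator
`ĝ^α_MF = (1/m₁) Σ_{i<m₁} g¹(zᵢ) + α ((1/m₂) Σ_{i<m₂} g²(zᵢ) − (1/m₁) Σ_{i<m₁} g²(zᵢ))`,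
as a function of the training inputs `ω ∈ 𝒵^{m₂}`. -/
noncomputable def gMF {𝒵 : Type*} {d : ℕ} (g1 g2 : 𝒵 → Fin d → ℝ) (m1 m2 : ℕ) (α : ℝ)
    (ω : Fin m2 → 𝒵) : Fin d → ℝ := fun j =>
  (1 / (m1 : ℝ)) * ∑ i ∈ Finset.univ.filter (fun i : Fin m2 => (i : ℕ) < m1), g1 (ω i) j
  + α * ((1 / (m2 : ℝ)) * ∑ i : Fin m2, g2 (ω i) j
    - (1 / (m1 : ℝ)) * ∑ i ∈ Finset.univ.filter (fun i : Fin m2 => (i : ℕ) < m1), g2 (ω i) j)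

/-- Matrix-coefficient vector-valued bi-fidelity Monte Carlo estimator
`ĝ^A_MF = (1/m₁) Σ_{i<m₁} g¹(zᵢ) + A ((1/m₂) Σ_{i<m₂} g²(zᵢ) − (1/m₁) Σ_{i<m₁} g²(zᵢ))`. -/
noncomputable def gMFA {𝒵 : Type*} {d : ℕ} (g1 g2 : 𝒵 → Fin d → ℝ) (m1 m2 : ℕ)
    (A : Matrix (Fin d) (Fin d) ℝ) (ω : Fin m2 → 𝒵) : Fin d → ℝ :=
  (fun j => (1 / (m1 : ℝ)) *
      ∑ i ∈ Finset.univ.filter (fun i : Fin m2 => (i : ℕ) < m1), g1 (ω i) j)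
  + A *ᵥ (fun j => (1 / (m2 : ℝ)) * ∑ i : Fin m2, g2 (ω i) j
      - (1 / (m1 : ℝ)) * ∑ i ∈ Finset.univ.filter (fun i : Fin m2 => (i : ℕ) < m1), g2 (ω i) j)

section AuxStmt9

lemma mp_eval_pi {ι : Type*} [Fintype ι] [DecidableEq ι] {𝒵 : Type*} [MeasurableSpace 𝒵]
    (π : Measure 𝒵) [IsProbabilityMeasure π] (i : ι) :
    MeasurePreserving (fun ω : ι → 𝒵 => ω i) (Measure.pi fun _ => π) π := by
  refine ⟨measurable_pi_apply i, ?_⟩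
  ext s hs
  rw [Measure.map_apply (measurable_pi_apply i) hs]
  have hpre : (fun ω : ι → 𝒵 => ω i) ⁻¹' s
      = Set.pi Set.univ (fun j => if j = i then s else Set.univ) := by
    ext ω
    simp only [Set.mem_preimage, Set.mem_pi, Set.mem_univ, forall_true_left]
    constructor
    · intro h j; by_cases hj : j = i <;> simp [hj, h]
    · intro h; have := h i; simpa using this
  rw [hpre, Measure.pi_pi]
  simp [apply_ite π]

lemma mp_pair_pi {ι : Type*} [Fintype ι] [DecidableEq ι] {𝒵 : Type*} [MeasurableSpace 𝒵]
    (π : Measure 𝒵) [IsProbabilityMeasure π] {i l : ι} (h : i ≠ l) :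
    MeasurePreserving (fun ω : ι → 𝒵 => (ω i, ω l)) (Measure.pi fun _ => π) (π.prod π) := by
  refine ⟨(measurable_pi_apply i).prodMk (measurable_pi_apply l), ?_⟩
  refine (Measure.prod_eq (μ := π) (ν := π) fun s t hs ht => ?_).symm
  rw [Measure.map_apply ((measurable_pi_apply i).prodMk (measurable_pi_apply l)) (hs.prod ht)]
  have hpre : (fun ω : ι → 𝒵 => (ω i, ω l)) ⁻¹' (s ×ˢ t)
      = Set.pi Set.univ (fun j => if j = i then s else if j = l then t else Set.univ) := by
    ext ω
    simp only [Set.mem_preimage, Set.mem_prod, Set.mem_pi, Set.mem_univ, forall_true_left]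
    constructor
    · rintro ⟨h1, h2⟩ j
      by_cases hj : j = i
      · simp [hj, h1]
      · by_cases hj' : j = l <;> simp [hj, hj', h2, Ne.symm h]
    · intro hj
      refine ⟨?_, ?_⟩
      · have := hj i; simpa using this
      · have := hj l; simpa [(Ne.symm h)] using this
  rw [hpre, Measure.pi_pi]
  have hfn : (fun j => π (if j = i then s else if j = l then t else Set.univ))
      = fun j => (if j = i then π s else 1) * (if j = l then π t else 1) := by
    funext j
    by_cases hj : j = i
    · subst hj; simp [h]
    · by_cases hj' : j = l <;> simp [hj, hj', Ne.symm h]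
  rw [hfn, Finset.prod_mul_distrib]
  simp

lemma integral_eval_pi' {ι : Type*} [Fintype ι] [DecidableEq ι] {𝒵 : Type*} [MeasurableSpace 𝒵]
    (π : Measure 𝒵) [IsProbabilityMeasure π] (i : ι) {φ : 𝒵 → ℝ}
    (hφ : AEStronglyMeasurable φ π) :
    ∫ ω, φ (ω i) ∂(Measure.pi fun _ : ι => π) = ∫ z, φ z ∂π := by
  have h := (mp_eval_pi π i).map_eq
  rw [← integral_map (measurable_pi_apply i).aemeasurable (h.symm ▸ hφ), h]

lemma integral_eval_mul_pi {ι : Type*} [Fintype ι] [DecidableEq ι] {𝒵 : Type*} [MeasurableSpace 𝒵]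
    (π : Measure 𝒵) [IsProbabilityMeasure π] {i l : ι} (hil : i ≠ l) {φ ψ : 𝒵 → ℝ}
    (hφ : Measurable φ) (hψ : Measurable ψ) :
    ∫ ω, φ (ω i) * ψ (ω l) ∂(Measure.pi fun _ : ι => π)
      = (∫ z, φ z ∂π) * ∫ z, ψ z ∂π := by
  have hmp := mp_pair_pi π hil
  have h := hmp.map_eq
  have hm : AEStronglyMeasurable (fun p : 𝒵 × 𝒵 => φ p.1 * ψ p.2)
      (Measure.map (fun ω : ι → 𝒵 => (ω i, ω l)) (Measure.pi fun _ : ι => π)) :=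
    ((hφ.comp measurable_fst).mul (hψ.comp measurable_snd)).aestronglyMeasurable
  rw [← integral_map hmp.measurable.aemeasurable hm, h, integral_prod_mul φ ψ]

lemma L2_mul_integrable {α : Type*} [MeasurableSpace α] {μ : Measure α} {f g : α → ℝ}
    (hf : MemLp f 2 μ) (hg : MemLp g 2 μ) : Integrable (fun x => f x * g x) μ := by
  have h : MemLp (f • g) 1 μ := hg.smul (φ := f) hf (hpqr := ⟨by rw [inv_one]; exact ENNReal.inv_two_add_inv_two⟩)
  have := memLp_one_iff_integrable.mp h
  simpa [Pi.smul_apply, smul_eq_mul, Pi.mul_def] using this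

lemma card_filter_lt {m1 m2 : ℕ} (h : m1 ≤ m2) :
    (Finset.univ.filter (fun i : Fin m2 => (i : ℕ) < m1)).card = m1 := by
  have : Finset.univ.filter (fun i : Fin m2 => (i : ℕ) < m1)
      = Finset.map (Fin.castLEEmb h) Finset.univ := by
    ext i
    simp only [Finset.mem_filter, Finset.mem_univ, true_and, Finset.mem_map]
    constructor
    · intro hi; exact ⟨⟨i, hi⟩, rfl⟩
    · rintro ⟨k, -, rfl⟩; exact k.2
  rw [this, Finset.card_map, Finset.card_univ, Fintype.card_fin]


lemma diag_cov {𝒵 : Type*} [MeasurableSpace 𝒵] (π : Measure 𝒵) [IsProbabilityMeasure π]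
    {d' : ℕ} (g1 g2 : 𝒵 → Fin d' → ℝ)
    (hg1m : ∀ j, Measurable fun z => g1 z j) (hg2m : ∀ j, Measurable fun z => g2 z j)
    (hg1L2 : ∀ j, MemLp (fun z => g1 z j) 2 π) (hg2L2 : ∀ j, MemLp (fun z => g2 z j) 2 π)
    {m1 m2 : ℕ} (hm1 : 0 < m1) (hm12 : m1 ≤ m2) (α : ℝ) (j : Fin d') :
    covMatrix (Measure.pi fun _ : Fin m2 => π) (gMF g1 g2 m1 m2 α) (gMF g1 g2 m1 m2 α) j j
      = (1 / m1) * covMatrix π g1 g1 j j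
        + (2 * α * (1 / m2 - 1 / m1)) * covMatrix π g1 g2 j j
        + (α ^ 2 * (1 / m1 - 1 / m2)) * covMatrix π g2 g2 j j := by
  have hm2 : 0 < m2 := lt_of_lt_of_le hm1 hm12
  have hm1R : (m1 : ℝ) ≠ 0 := Nat.cast_ne_zero.mpr hm1.ne'
  have hm2R : (m2 : ℝ) ≠ 0 := Nat.cast_ne_zero.mpr hm2.ne'
  set P := (Measure.pi fun _ : Fin m2 => π) with hP
  set u : 𝒵 → ℝ := fun z => g1 z j with hu
  set v : 𝒵 → ℝ := fun z => g2 z j with hv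
  set c1 : Fin m2 → ℝ := fun i => if (i : ℕ) < m1 then (1 / m1 : ℝ) else 0 with hc1
  set c2 : Fin m2 → ℝ := fun i => α * (1 / m2 - c1 i) with hc2
  set φ : Fin m2 → 𝒵 → ℝ := fun i z => c1 i * u z + c2 i * v z with hφdef
  have hum : Measurable u := hg1m j
  have hvm : Measurable v := hg2m j
  have hu2 : MemLp u 2 π := hg1L2 j
  have hv2 : MemLp v 2 π := hg2L2 j
  have huint : Integrable u π := hu2.integrable one_le_two
  have hvint : Integrable v π := hv2.integrable one_le_two
  have hφm : ∀ i, Measurable (φ i) := fun i => (hum.const_mul _).add (hvm.const_mul _)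
  have hφ2 : ∀ i, MemLp (φ i) 2 π := fun i => (hu2.const_mul _).add (hv2.const_mul _)
  have hφint : ∀ i, Integrable (φ i) π := fun i => (hφ2 i).integrable one_le_two
  have hX2 : ∀ i, MemLp (fun ω : Fin m2 → 𝒵 => φ i (ω i)) 2 P := fun i => by
    simpa [Function.comp_def] using (hφ2 i).comp_measurePreserving (mp_eval_pi π i)
  have hXint : ∀ i, Integrable (fun ω : Fin m2 → 𝒵 => φ i (ω i)) P := fun i =>
    (hX2 i).integrable one_le_two
  have hXXint : ∀ i l, Integrable (fun ω : Fin m2 → 𝒵 => φ i (ω i) * φ l (ω l)) P :=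
    fun i l => L2_mul_integrable (hX2 i) (hX2 l)
  -- decomposition of the estimator
  have hF : ∀ ω : Fin m2 → 𝒵, gMF g1 g2 m1 m2 α ω j = ∑ i, φ i (ω i) := by
    intro ω
    simp only [gMF, hφdef, Finset.sum_filter, ← hu, ← hv]
    rw [Finset.mul_sum, Finset.mul_sum, Finset.mul_sum, ← Finset.sum_sub_distrib,
      Finset.mul_sum, ← Finset.sum_add_distrib]
    refine Finset.sum_congr rfl fun i _ => ?_
    by_cases hi : (i : ℕ) < m1 <;> simp [hc1, hc2, hi] <;> ring
  -- first moment
  have hIφ : ∀ i, ∫ ω, φ i (ω i) ∂P = ∫ z, φ i z ∂π := fun i =>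
    integral_eval_pi' π i (hφm i).aestronglyMeasurable
  have hEF : ∫ ω, gMF g1 g2 m1 m2 α ω j ∂P = ∑ i, ∫ z, φ i z ∂π := by
    simp only [hF]
    rw [integral_finset_sum _ fun i _ => hXint i]
    exact Finset.sum_congr rfl fun i _ => hIφ i
  -- second moment
  have hEFF : ∫ ω, gMF g1 g2 m1 m2 α ω j * gMF g1 g2 m1 m2 α ω j ∂P
      = ∑ i, ∑ l, ∫ ω, φ i (ω i) * φ l (ω l) ∂P := by
    simp only [hF, Finset.sum_mul_sum]
    rw [integral_finset_sum _ fun i _ => integrable_finset_sum _ fun l _ => hXXint i l]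
    exact Finset.sum_congr rfl fun i _ =>
      integral_finset_sum _ fun l _ => hXXint i l
  have hcross : ∀ i l : Fin m2, i ≠ l →
      ∫ ω, φ i (ω i) * φ l (ω l) ∂P = (∫ z, φ i z ∂π) * ∫ z, φ l z ∂π :=
    fun i l h => integral_eval_mul_pi π h (hφm i) (hφm l)
  have hdiag : ∀ i : Fin m2,
      ∫ ω, φ i (ω i) * φ i (ω i) ∂P = ∫ z, φ i z * φ i z ∂π := fun i =>
    integral_eval_pi' π i ((hφm i).mul (hφm i)).aestronglyMeasurable
  -- assemble the covariance entry
  simp only [covMatrix, Matrix.of_apply]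
  rw [hEFF, hEF, Finset.sum_mul_sum, ← Finset.sum_sub_distrib]
  have hinner : ∀ i : Fin m2,
      (∑ l, ∫ ω, φ i (ω i) * φ l (ω l) ∂P) - ∑ l, (∫ z, φ i z ∂π) * ∫ z, φ l z ∂π
        = ∫ z, φ i z * φ i z ∂π - (∫ z, φ i z ∂π) * ∫ z, φ i z ∂π := by
    intro i
    rw [← Finset.sum_sub_distrib]
    rw [Finset.sum_eq_single_of_mem i (Finset.mem_univ i)]
    · rw [hdiag i]
    · intro l _ hl
      rw [hcross i l (Ne.symm hl), sub_self]
  simp only [hinner]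
  -- per-sample variance formula
  have hsingle : ∀ i : Fin m2,
      ∫ z, φ i z * φ i z ∂π - (∫ z, φ i z ∂π) * ∫ z, φ i z ∂π
        = c1 i ^ 2 * ((∫ z, u z * u z ∂π) - (∫ z, u z ∂π) * ∫ z, u z ∂π)
          + (2 * c1 i * c2 i) * ((∫ z, u z * v z ∂π) - (∫ z, u z ∂π) * ∫ z, v z ∂π)
          + c2 i ^ 2 * ((∫ z, v z * v z ∂π) - (∫ z, v z ∂π) * ∫ z, v z ∂π) := by
    intro i
    have h2 : ∫ z, φ i z ∂π = c1 i * ∫ z, u z ∂π + c2 i * ∫ z, v z ∂π := by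
      simp only [hφdef]
      have ha : Integrable (fun z => c1 i * u z) π := huint.const_mul _
      have hb : Integrable (fun z => c2 i * v z) π := hvint.const_mul _
      rw [integral_add ha hb, integral_const_mul, integral_const_mul]
    have h1 : ∫ z, φ i z * φ i z ∂π
        = c1 i ^ 2 * ∫ z, u z * u z ∂π + (2 * c1 i * c2 i) * ∫ z, u z * v z ∂π
          + c2 i ^ 2 * ∫ z, v z * v z ∂π := by
      have hcongr : ∫ z, φ i z * φ i z ∂π
          = ∫ z, (c1 i ^ 2 * (u z * u z) + ((2 * c1 i * c2 i) * (u z * v z)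
              + c2 i ^ 2 * (v z * v z))) ∂π := by
        refine integral_congr_ae (Filter.Eventually.of_forall fun z => ?_)
        simp only [hφdef]; ring
      have ha : Integrable (fun z => c1 i ^ 2 * (u z * u z)) π :=
        (L2_mul_integrable hu2 hu2).const_mul _
      have hb : Integrable (fun z => 2 * c1 i * c2 i * (u z * v z)) π :=
        (L2_mul_integrable hu2 hv2).const_mul _
      have hc : Integrable (fun z => c2 i ^ 2 * (v z * v z)) π :=
        (L2_mul_integrable hv2 hv2).const_mul _
      have hbc : Integrable (fun z => 2 * c1 i * c2 i * (u z * v z)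
          + c2 i ^ 2 * (v z * v z)) π := hb.add hc
      rw [hcongr, integral_add ha hbc, integral_add hb hc,
        integral_const_mul, integral_const_mul, integral_const_mul]
      ring
    rw [h1, h2]; ring
  simp only [hsingle]
  -- sum the coefficients
  have hcard2 : (Finset.univ.filter (fun i : Fin m2 => ¬ (i : ℕ) < m1)).card = m2 - m1 := by
    have h := Finset.card_filter_add_card_filter_not
      (s := (Finset.univ : Finset (Fin m2))) (p := fun i : Fin m2 => (i : ℕ) < m1)
    have h1 := card_filter_lt hm12
    simp only [Finset.card_univ, Fintype.card_fin] at h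
    omega
  have hsum : ∀ a b : ℝ, (∑ i : Fin m2, if (i : ℕ) < m1 then a else b)
      = m1 * a + ((m2 : ℝ) - m1) * b := by
    intro a b
    rw [Finset.sum_ite, Finset.sum_const, Finset.sum_const, card_filter_lt hm12, hcard2]
    simp [nsmul_eq_mul, Nat.cast_sub hm12]
  have hs1 : ∑ i, c1 i ^ 2 = 1 / (m1 : ℝ) := by
    have : ∀ i : Fin m2, c1 i ^ 2 = if (i : ℕ) < m1 then ((1 : ℝ) / m1) ^ 2 else 0 := by
      intro i; by_cases hi : (i : ℕ) < m1 <;> simp [hc1, hi]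
    rw [Finset.sum_congr rfl fun i _ => this i, hsum]
    field_simp
    ring
  have hs2 : ∑ i, 2 * c1 i * c2 i = 2 * α * (1 / (m2 : ℝ) - 1 / m1) := by
    have : ∀ i : Fin m2, 2 * c1 i * c2 i
        = if (i : ℕ) < m1 then 2 * ((1 : ℝ) / m1) * (α * (1 / m2 - 1 / m1)) else 0 := by
      intro i; by_cases hi : (i : ℕ) < m1 <;> simp [hc1, hc2, hi]
    rw [Finset.sum_congr rfl fun i _ => this i, hsum]
    field_simp
    ring
  have hs3 : ∑ i, c2 i ^ 2 = α ^ 2 * (1 / (m1 : ℝ) - 1 / m2) := by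
    have : ∀ i : Fin m2, c2 i ^ 2
        = if (i : ℕ) < m1 then (α * ((1 : ℝ) / m2 - 1 / m1)) ^ 2 else (α * (1 / m2)) ^ 2 := by
      intro i; by_cases hi : (i : ℕ) < m1 <;> simp [hc1, hc2, hi]
    rw [Finset.sum_congr rfl fun i _ => this i, hsum]
    have hle : (m1 : ℝ) ≤ m2 := Nat.cast_le.mpr hm12
    field_simp
    ring
  rw [Finset.sum_add_distrib, Finset.sum_add_distrib, ← Finset.sum_mul, ← Finset.sum_mul,
    ← Finset.sum_mul, hs1, hs2, hs3]

lemma trace_cov_stmt9 {𝒵 : Type*} [MeasurableSpace 𝒵] (π : Measure 𝒵) [IsProbabilityMeasure π]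
    {d' : ℕ} (g1 g2 : 𝒵 → Fin d' → ℝ)
    (hg1m : ∀ j, Measurable fun z => g1 z j) (hg2m : ∀ j, Measurable fun z => g2 z j)
    (hg1L2 : ∀ j, MemLp (fun z => g1 z j) 2 π) (hg2L2 : ∀ j, MemLp (fun z => g2 z j) 2 π)
    {m1 m2 : ℕ} (hm1 : 0 < m1) (hm12 : m1 ≤ m2) (α : ℝ) :
    (covMatrix (Measure.pi fun _ : Fin m2 => π) (gMF g1 g2 m1 m2 α) (gMF g1 g2 m1 m2 α)).trace
      = (1 / m1) * (covMatrix π g1 g1).trace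
        + (2 * α * (1 / m2 - 1 / m1)) * (covMatrix π g1 g2).trace
        + (α ^ 2 * (1 / m1 - 1 / m2)) * (covMatrix π g2 g2).trace := by
  simp only [Matrix.trace, Matrix.diag]
  rw [Finset.sum_congr rfl fun j _ =>
    diag_cov π g1 g2 hg1m hg2m hg1L2 hg2L2 hm1 hm12 α j]
  rw [Finset.sum_add_distrib, Finset.sum_add_distrib, ← Finset.mul_sum, ← Finset.mul_sum,
    ← Finset.mul_sum]

end AuxStmt9

/-- Lemma 2, optimal scalar coefficient: if m₁ < m₂ and Tr(C₂₂) > 0, then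
α* = Tr(C₁₂)/Tr(C₂₂) minimizes the generalized variance Tr(Cov[ĝ^α_MF, ĝ^α_MF]). -/
theorem stmt_9 {𝒵 : Type*} [MeasurableSpace 𝒵] (π : Measure 𝒵) [IsProbabilityMeasure π]
    {d' : ℕ} (g1 g2 : 𝒵 → Fin d' → ℝ)
    (hg1m : ∀ j, Measurable fun z => g1 z j) (hg2m : ∀ j, Measurable fun z => g2 z j)
    (hg1L2 : ∀ j, MemLp (fun z => g1 z j) 2 π) (hg2L2 : ∀ j, MemLp (fun z => g2 z j) 2 π)
    {m1 m2 : ℕ} (hm1 : 0 < m1) (hm12 : m1 < m2)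
    (htr : 0 < (covMatrix π g2 g2).trace)
    (αstar : ℝ) (hαstar : αstar = (covMatrix π g1 g2).trace / (covMatrix π g2 g2).trace) :
    ∀ α : ℝ,
      (covMatrix (Measure.pi fun _ : Fin m2 => π)
          (gMF g1 g2 m1 m2 αstar) (gMF g1 g2 m1 m2 αstar)).trace
        ≤ (covMatrix (Measure.pi fun _ : Fin m2 => π)
            (gMF g1 g2 m1 m2 α) (gMF g1 g2 m1 m2 α)).trace := by
  intro α
  rw [trace_cov_stmt9 π g1 g2 hg1m hg2m hg1L2 hg2L2 hm1 hm12.le αstar,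
    trace_cov_stmt9 π g1 g2 hg1m hg2m hg1L2 hg2L2 hm1 hm12.le α]
  set T12 := (covMatrix π g1 g2).trace
  set T22 := (covMatrix π g2 g2).trace
  have hm1R : (0 : ℝ) < m1 := by exact_mod_cast hm1
  have hlt : (m1 : ℝ) < m2 := by exact_mod_cast hm12
  have hlam : (0 : ℝ) < 1 / m1 - 1 / m2 := by
    rw [sub_pos]
    exact one_div_lt_one_div_of_lt hm1R hlt
  have hT : αstar * T22 = T12 := by
    rw [hαstar]; field_simp
  rw [← hT]
  nlinarith [mul_nonneg (mul_nonneg hlam.le htr.le) (sq_nonneg (α - αstar))]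
end

section
/- (Lemma 4, optimal matrix coefficient) Suppose C_{22} is invertible and let A* = C_{12} C_{22}^{-1}. Then A* minimizes the generalized variance of the multifidelity estimator over all matrix coefficients: for every A ∈ ℝ^{d'×d'}, Tr(Cov[ĝ^{A*}_MF, ĝ^{A*}_MF]) ≤ Tr(Cov[ĝ^A_MF, ĝ^A_MF]). -/
set_option linter.unusedSectionVars false
set_option maxHeartbeats 1000000


open MeasureTheory
open scoped Matrix

noncomputable def scov {Ω : Type*} [MeasurableSpace Ω] (μ : Measure Ω) (f g : Ω → ℝ) : ℝ :=
  (∫ x, f x * g x ∂μ) - (∫ x, f x ∂μ) * (∫ x, g x ∂μ)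

section scovlemmas
variable {Ω : Type*} [MeasurableSpace Ω] {μ : Measure Ω} [IsProbabilityMeasure μ]

theorem memLp_mul_integrable {f g : Ω → ℝ} (hf : MemLp f 2 μ) (hg : MemLp g 2 μ) :
    Integrable (fun x => f x * g x) μ := by
  have h : MemLp (f • g) 1 μ := hg.smul hf
  simpa [smul_eq_mul, Pi.mul_def] using h.integrable le_rfl

theorem scov_comm (f g : Ω → ℝ) : scov μ f g = scov μ g f := by
  simp [scov, mul_comm]

theorem scov_const_mul (c : ℝ) (f g : Ω → ℝ) :
    scov μ (fun x => c * f x) g = c * scov μ f g := by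
  simp only [scov, mul_assoc, integral_const_mul]
  ring

theorem scov_const_mul_right (c : ℝ) (f g : Ω → ℝ) :
    scov μ f (fun x => c * g x) = c * scov μ f g := by
  rw [scov_comm, scov_const_mul, scov_comm]

theorem scov_self_nonneg {f : Ω → ℝ} (hf : MemLp f 2 μ) : 0 ≤ scov μ f f := by
  have hint : Integrable f μ := hf.integrable one_le_two
  have hsq : Integrable (fun x => f x ^ 2) μ := hf.integrable_sq
  set m := ∫ x, f x ∂μ with hm
  have h0 : 0 ≤ ∫ x, (f x - m) ^ 2 ∂μ := integral_nonneg fun x => sq_nonneg _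
  have hexp : ∫ x, (f x - m) ^ 2 ∂μ = (∫ x, f x ^ 2 ∂μ) - m ^ 2 := by
    have : ∀ x, (f x - m) ^ 2 = f x ^ 2 - (2 * m) * f x + m ^ 2 := fun x => by ring
    simp_rw [this]
    have h1 : Integrable (fun x => f x ^ 2 - 2 * m * f x) μ := hsq.sub (hint.const_mul _)
    rw [integral_add h1 (integrable_const _),
      integral_sub hsq (hint.const_mul _), integral_const_mul, integral_const]
    simp only [measure_univ, ENNReal.toReal_one, smul_eq_mul, one_mul, probReal_univ, ← hm]
    ring
  have : 0 ≤ (∫ x, f x ^ 2 ∂μ) - m ^ 2 := hexp ▸ h0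
  have hff : (∫ x, f x * f x ∂μ) = ∫ x, f x ^ 2 ∂μ := by simp_rw [← sq]
  simp only [scov, hff, ← hm, ← sq]
  linarith

theorem scov_sum_left {κ : Type*} (s : Finset κ) (F : κ → Ω → ℝ) (g : Ω → ℝ)
    (hF : ∀ k ∈ s, MemLp (F k) 2 μ) (hg : MemLp g 2 μ) :
    scov μ (fun x => ∑ k ∈ s, F k x) g = ∑ k ∈ s, scov μ (F k) g := by
  unfold scov
  simp_rw [Finset.sum_mul]
  rw [integral_finset_sum s (fun k hk => memLp_mul_integrable (hF k hk) hg),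
    integral_finset_sum s (fun k hk => (hF k hk).integrable one_le_two),
    Finset.sum_mul, ← Finset.sum_sub_distrib]

theorem scov_sum_right {κ : Type*} (s : Finset κ) (G : κ → Ω → ℝ) (f : Ω → ℝ)
    (hG : ∀ k ∈ s, MemLp (G k) 2 μ) (hf : MemLp f 2 μ) :
    scov μ f (fun x => ∑ k ∈ s, G k x) = ∑ k ∈ s, scov μ f (G k) := by
  rw [scov_comm, scov_sum_left s G f hG hf]
  simp_rw [scov_comm f]

theorem scov_add_left {f f' g : Ω → ℝ} (hf : MemLp f 2 μ) (hf' : MemLp f' 2 μ)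
    (hg : MemLp g 2 μ) :
    scov μ (fun x => f x + f' x) g = scov μ f g + scov μ f' g := by
  unfold scov
  simp_rw [add_mul]
  rw [integral_add (memLp_mul_integrable hf hg) (memLp_mul_integrable hf' hg),
    integral_add (hf.integrable one_le_two) (hf'.integrable one_le_two)]
  ring

theorem scov_add_right {f g g' : Ω → ℝ} (hf : MemLp f 2 μ) (hg : MemLp g 2 μ)
    (hg' : MemLp g' 2 μ) :
    scov μ f (fun x => g x + g' x) = scov μ f g + scov μ f g' := by
  rw [scov_comm, scov_add_left hg hg' hf, scov_comm f, scov_comm g' f]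

end scovlemmas

section pihelpers
variable {𝒵 : Type*} [MeasurableSpace 𝒵] (π : Measure 𝒵) [IsProbabilityMeasure π] {m2 : ℕ}

theorem integral_eval (f : 𝒵 → ℝ) (hf : Integrable f π) (i : Fin m2) :
    ∫ ω : Fin m2 → 𝒵, f (ω i) ∂(Measure.pi fun _ => π) = ∫ z, f z ∂π := by
  letI : MeasureSpace 𝒵 := ⟨π⟩
  have hvol : (Measure.pi fun _ : Fin m2 => π) = (volume : Measure (Fin m2 → 𝒵)) := rfl
  rw [hvol]
  have key := integral_fintype_prod_eq_prod (𝕜 := ℝ) (ι := Fin m2)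
    (fun k => if k = i then f else fun _ => (1 : ℝ)) (μ := fun _ => (volume : Measure 𝒵))
  rw [← volume_pi] at key
  have h1 : ∀ x : Fin m2 → 𝒵,
      (∏ k, (if k = i then f else fun _ => (1 : ℝ)) (x k)) = f (x i) := by
    intro x
    rw [Fintype.prod_eq_single i]
    · simp
    · intro k hk; simp [hk]
  have h2 : (∏ k, ∫ z, (if k = i then f else fun _ => (1 : ℝ)) z) = ∫ z, f z ∂π := by
    rw [Fintype.prod_eq_single i]
    · simp only [if_pos rfl]; rfl
    · intro k hk; simp [hk]
  simp_rw [h1] at key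
  rw [key, h2]

theorem integrable_eval (f : 𝒵 → ℝ) (hf : Integrable f π) (i : Fin m2) :
    Integrable (fun ω : Fin m2 → 𝒵 => f (ω i)) (Measure.pi fun _ => π) := by
  letI : MeasureSpace 𝒵 := ⟨π⟩
  have hvol : (Measure.pi fun _ : Fin m2 => π) = (volume : Measure (Fin m2 → 𝒵)) := rfl
  rw [hvol]
  have key : Integrable (fun x : Fin m2 → 𝒵 =>
      ∏ k, (if k = i then f else fun _ => (1 : ℝ)) (x k)) := by
    apply Integrable.fintype_prod
    intro k
    by_cases hk : k = i
    · subst hk; simp only [if_pos rfl]; exact hf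
    · simp [hk, integrable_const]
  apply key.congr
  filter_upwards with x
  rw [Fintype.prod_eq_single i]
  · simp
  · intro k hk; simp [hk]

theorem integral_eval_mul_ne (f g : 𝒵 → ℝ) (hf : Integrable f π) (hg : Integrable g π)
    {i j : Fin m2} (hij : i ≠ j) :
    ∫ ω : Fin m2 → 𝒵, f (ω i) * g (ω j) ∂(Measure.pi fun _ => π)
      = (∫ z, f z ∂π) * ∫ z, g z ∂π := by
  letI : MeasureSpace 𝒵 := ⟨π⟩
  have hvol : (Measure.pi fun _ : Fin m2 => π) = (volume : Measure (Fin m2 → 𝒵)) := rfl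
  rw [hvol]
  set F : Fin m2 → 𝒵 → ℝ := fun k => if k = i then f else if k = j then g else fun _ => 1 with hF
  have key := integral_fintype_prod_eq_prod (𝕜 := ℝ) (ι := Fin m2) F (μ := fun _ => (volume : Measure 𝒵))
  rw [← volume_pi] at key
  have h1 : ∀ x : Fin m2 → 𝒵, (∏ k, F k (x k)) = f (x i) * g (x j) := by
    intro x
    rw [← Finset.prod_subset (Finset.subset_univ ({i, j} : Finset (Fin m2)))
      (fun k _ hk => ?_), Finset.prod_pair hij]
    · simp [hF, hij, Ne.symm hij]
    · simp only [Finset.mem_insert, Finset.mem_singleton, not_or] at hk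
      simp [hF, hk.1, hk.2]
  have h2 : (∏ k, ∫ z, F k z) = (∫ z, f z ∂π) * ∫ z, g z ∂π := by
    rw [← Finset.prod_subset (Finset.subset_univ ({i, j} : Finset (Fin m2)))
      (fun k _ hk => ?_), Finset.prod_pair hij]
    · simp only [hF, if_pos rfl, if_neg (Ne.symm hij)]; rfl
    · simp only [Finset.mem_insert, Finset.mem_singleton, not_or] at hk
      simp [hF, hk.1, hk.2]
  simp_rw [h1] at key
  rw [key, h2]

theorem integrable_eval_mul (f g : 𝒵 → ℝ) (hf : MemLp f 2 π) (hg : MemLp g 2 π)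
    (i j : Fin m2) :
    Integrable (fun ω : Fin m2 → 𝒵 => f (ω i) * g (ω j)) (Measure.pi fun _ => π) := by
  by_cases hij : i = j
  · subst hij
    exact integrable_eval π (fun z => f z * g z)
      (by
        have h : MemLp (f • g) 1 π := hg.smul hf
        simpa [smul_eq_mul, Pi.mul_def] using h.integrable le_rfl) i
  · letI : MeasureSpace 𝒵 := ⟨π⟩
    have hvol : (Measure.pi fun _ : Fin m2 => π) = (volume : Measure (Fin m2 → 𝒵)) := rfl
    rw [hvol]
    set F : Fin m2 → 𝒵 → ℝ := fun k => if k = i then f else if k = j then g else fun _ => 1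
      with hF
    have key : Integrable (fun x : Fin m2 → 𝒵 => ∏ k, F k (x k)) := by
      apply Integrable.fintype_prod
      intro k
      by_cases hk1 : k = i
      · simp only [hF, if_pos hk1]; exact hf.integrable one_le_two
      · by_cases hk2 : k = j
        · simp only [hF, if_neg hk1, if_pos hk2]
          exact hg.integrable one_le_two
        · simp [hF, hk1, hk2, integrable_const]
    apply key.congr
    filter_upwards with x
    rw [← Finset.prod_subset (Finset.subset_univ ({i, j} : Finset (Fin m2)))
      (fun k _ hk => ?_), Finset.prod_pair hij]
    · simp [hF, hij, Ne.symm hij]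
    · simp only [Finset.mem_insert, Finset.mem_singleton, not_or] at hk
      simp [hF, hk.1, hk.2]

end pihelpers

section covsum
variable {𝒵 : Type*} [MeasurableSpace 𝒵] (π : Measure 𝒵) [IsProbabilityMeasure π] {m2 : ℕ}

theorem scov_pi_sum (F G : Fin m2 → 𝒵 → ℝ)
    (hF : ∀ i, MemLp (F i) 2 π) (hG : ∀ i, MemLp (G i) 2 π) :
    scov (Measure.pi fun _ : Fin m2 => π)
        (fun ω => ∑ i, F i (ω i)) (fun ω => ∑ i, G i (ω i))
      = ∑ i, scov π (F i) (G i) := by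
  set P := (Measure.pi fun _ : Fin m2 => π) with hP
  have intF : ∀ i, Integrable (F i) π := fun i => (hF i).integrable one_le_two
  have intG : ∀ i, Integrable (G i) π := fun i => (hG i).integrable one_le_two
  have intFG : ∀ i, Integrable (fun z => F i z * G i z) π :=
    fun i => memLp_mul_integrable (hF i) (hG i)
  have e1 : ∫ ω, (∑ i, F i (ω i)) ∂P = ∑ i, ∫ z, F i z ∂π := by
    rw [integral_finset_sum _ (fun i _ => integrable_eval π (F i) (intF i) i)]
    exact Finset.sum_congr rfl fun i _ => integral_eval π (F i) (intF i) i
  have e2 : ∫ ω, (∑ i, G i (ω i)) ∂P = ∑ i, ∫ z, G i z ∂π := by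
    rw [integral_finset_sum _ (fun i _ => integrable_eval π (G i) (intG i) i)]
    exact Finset.sum_congr rfl fun i _ => integral_eval π (G i) (intG i) i
  have e3 : ∫ ω, (∑ i, F i (ω i)) * (∑ j, G j (ω j)) ∂P
      = ∑ i, ∑ j, (if i = j then ∫ z, F i z * G i z ∂π
          else (∫ z, F i z ∂π) * ∫ z, G j z ∂π) := by
    simp_rw [Finset.sum_mul_sum]
    rw [integral_finset_sum _ (fun i _ => integrable_finset_sum _
      (fun j _ => integrable_eval_mul π (F i) (G j) (hF i) (hG j) i j))]
    refine Finset.sum_congr rfl fun i _ => ?_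
    rw [integral_finset_sum _ (fun j _ => integrable_eval_mul π (F i) (G j) (hF i) (hG j) i j)]
    refine Finset.sum_congr rfl fun j _ => ?_
    by_cases hij : i = j
    · subst hij
      rw [if_pos rfl]
      exact integral_eval π (fun z => F i z * G i z) (intFG i) i
    · rw [if_neg hij]
      exact integral_eval_mul_ne π (F i) (G j) (intF i) (intG j) hij
  unfold scov
  rw [e1, e2, e3]
  have e4 : ∀ i j : Fin m2, (if i = j then ∫ z, F i z * G i z ∂π
        else (∫ z, F i z ∂π) * ∫ z, G j z ∂π)
      = (∫ z, F i z ∂π) * (∫ z, G j z ∂π)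
        + (if i = j then (∫ z, F i z * G i z ∂π) - (∫ z, F i z ∂π) * ∫ z, G i z ∂π else 0) := by
    intro i j
    by_cases hij : i = j
    · subst hij; simp
    · simp [hij]
  simp_rw [e4, Finset.sum_add_distrib, Finset.sum_ite_eq, Finset.mem_univ, if_pos,
    ← Finset.sum_mul_sum]
  ring
end covsum

noncomputable def coefA (m1 : ℕ) {m2 : ℕ} (i : Fin m2) : ℝ :=
  if (i : ℕ) < m1 then 1 / (m1 : ℝ) else 0

noncomputable def coefB (m1 : ℕ) {m2 : ℕ} (i : Fin m2) : ℝ := 1 / (m2 : ℝ) - coefA m1 i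

section coefs
variable {m1 m2 : ℕ}

theorem sum_ite_fin (hm12 : m1 ≤ m2) (c : ℝ) :
    (∑ i : Fin m2, if (i : ℕ) < m1 then c else 0) = m1 * c := by
  rw [Fin.sum_univ_eq_sum_range (fun i => if i < m1 then c else 0) m2, ← Finset.sum_filter]
  have hfil : (Finset.range m2).filter (fun i => i < m1) = Finset.range m1 := by
    ext x
    simp only [Finset.mem_filter, Finset.mem_range]
    omega
  rw [hfil, Finset.sum_const, Finset.card_range, nsmul_eq_mul]

theorem sum_coefA (hm1 : 0 < m1) (hm12 : m1 ≤ m2) : ∑ i : Fin m2, coefA m1 i = 1 := by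
  unfold coefA
  rw [sum_ite_fin hm12]
  field_simp

theorem sum_coefA_sq (hm1 : 0 < m1) (hm12 : m1 ≤ m2) :
    ∑ i : Fin m2, coefA m1 i * coefA m1 i = 1 / m1 := by
  unfold coefA
  have : ∀ i : Fin m2, (if (i : ℕ) < m1 then 1 / (m1:ℝ) else 0) *
      (if (i : ℕ) < m1 then 1 / (m1:ℝ) else 0)
      = if (i : ℕ) < m1 then 1 / (m1:ℝ) * (1 / m1) else 0 := by
    intro i; split <;> ring
  simp_rw [this, sum_ite_fin hm12]
  have h : (m1 : ℝ) ≠ 0 := Nat.cast_ne_zero.mpr hm1.ne'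
  field_simp

theorem sum_coefAB (hm1 : 0 < m1) (hm12 : m1 ≤ m2) :
    ∑ i : Fin m2, coefA m1 i * coefB m1 i = 1 / m2 - 1 / m1 := by
  unfold coefB
  simp_rw [mul_sub, Finset.sum_sub_distrib, ← Finset.sum_mul,
    sum_coefA hm1 hm12, sum_coefA_sq hm1 hm12, one_mul]

theorem sum_coefBB (hm1 : 0 < m1) (hm12 : m1 ≤ m2) :
    ∑ i : Fin m2, coefB m1 i * coefB m1 i = 1 / m1 - 1 / m2 := by
  have hm2 : 0 < m2 := lt_of_lt_of_le hm1 hm12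
  have h2 : (m2 : ℝ) ≠ 0 := Nat.cast_ne_zero.mpr hm2.ne'
  have expand : ∀ i : Fin m2, coefB m1 i * coefB m1 i
      = (1 / m2) * (1 / m2) - 2 * (1 / m2) * coefA m1 i + coefA m1 i * coefA m1 i := by
    intro i; unfold coefB; ring
  simp_rw [expand, Finset.sum_add_distrib, Finset.sum_sub_distrib, Finset.sum_const,
    ← Finset.mul_sum, sum_coefA hm1 hm12, sum_coefA_sq hm1 hm12, Finset.card_univ,
    Fintype.card_fin, nsmul_eq_mul]
  field_simp
  ring

end coefs

section gmfa
variable {𝒵 : Type*} {d : ℕ}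

theorem gMFA_apply (g1 g2 : 𝒵 → Fin d → ℝ) (m1 m2 : ℕ) (A : Matrix (Fin d) (Fin d) ℝ)
    (ω : Fin m2 → 𝒵) (p : Fin d) :
    gMFA g1 g2 m1 m2 A ω p
      = ∑ i, (coefA m1 i * g1 (ω i) p + coefB m1 i * ∑ k, A p k * g2 (ω i) k) := by
  unfold gMFA
  simp only [Pi.add_apply, Matrix.mulVec, dotProduct]
  rw [Finset.sum_add_distrib]
  congr 1
  · unfold coefA
    simp_rw [ite_mul, zero_mul]
    rw [← Finset.sum_filter, Finset.mul_sum]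
  · have hk : ∀ k, (1 / (m2:ℝ)) * (∑ i : Fin m2, g2 (ω i) k)
        - (1 / (m1:ℝ)) * ∑ i ∈ Finset.univ.filter (fun i : Fin m2 => (i : ℕ) < m1), g2 (ω i) k
        = ∑ i : Fin m2, coefB m1 i * g2 (ω i) k := by
      intro k
      unfold coefB coefA
      simp_rw [sub_mul, Finset.sum_sub_distrib, ite_mul, zero_mul]
      rw [← Finset.sum_filter, Finset.mul_sum, Finset.mul_sum]
    simp_rw [hk, Finset.mul_sum]
    rw [Finset.sum_comm]
    refine Finset.sum_congr rfl fun i _ => ?_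
    refine Finset.sum_congr rfl fun k _ => ?_
    ring
end gmfa

theorem covMatrix_eq_scov {Ω : Type*} [MeasurableSpace Ω] (P : Measure Ω)
    {d : ℕ} (V W : Ω → Fin d → ℝ) (i j : Fin d) :
    covMatrix P V W i j = scov P (fun ω => V ω i) (fun ω => W ω j) := rfl

section combo
variable {Ω : Type*} [MeasurableSpace Ω] {μ : Measure Ω} [IsProbabilityMeasure μ]

theorem scov_combo (a b a' b' : ℝ) {u v u' v' : Ω → ℝ}
    (hu : MemLp u 2 μ) (hv : MemLp v 2 μ) (hu' : MemLp u' 2 μ) (hv' : MemLp v' 2 μ) :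
    scov μ (fun z => a * u z + b * v z) (fun z => a' * u' z + b' * v' z)
      = a * a' * scov μ u u' + a * b' * scov μ u v'
        + b * a' * scov μ v u' + b * b' * scov μ v v' := by
  have hR : MemLp (fun z => a' * u' z + b' * v' z) 2 μ :=
    (hu'.const_mul a').add (hv'.const_mul b')
  rw [scov_add_left (hu.const_mul a) (hv.const_mul b) hR,
    scov_add_right (hu.const_mul a) (hu'.const_mul a') (hv'.const_mul b'),
    scov_add_right (hv.const_mul b) (hu'.const_mul a') (hv'.const_mul b'),
    scov_const_mul, scov_const_mul, scov_const_mul, scov_const_mul,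
    scov_const_mul_right, scov_const_mul_right, scov_const_mul_right, scov_const_mul_right]
  ring
end combo

section quadform
variable {𝒵 : Type*} [MeasurableSpace 𝒵] {π : Measure 𝒵} [IsProbabilityMeasure π]
  {d : ℕ} {g1 g2 : 𝒵 → Fin d → ℝ}

theorem scov_lincomb_left (hg2L2 : ∀ j, MemLp (fun z => g2 z j) 2 π)
    (u : Fin d → ℝ) {f : 𝒵 → ℝ} (hf : MemLp f 2 π) :
    scov π (fun z => ∑ k, u k * g2 z k) f = ∑ k, u k * scov π (fun z => g2 z k) f := by
  rw [scov_sum_left Finset.univ (fun k => fun z => u k * g2 z k) f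
    (fun k _ => (hg2L2 k).const_mul (u k)) hf]
  exact Finset.sum_congr rfl fun k _ => scov_const_mul (u k) _ f

theorem scov_lincomb_right (hg2L2 : ∀ j, MemLp (fun z => g2 z j) 2 π)
    (u : Fin d → ℝ) {f : 𝒵 → ℝ} (hf : MemLp f 2 π) :
    scov π f (fun z => ∑ k, u k * g2 z k) = ∑ k, u k * scov π f (fun z => g2 z k) := by
  rw [scov_comm, scov_lincomb_left hg2L2 u hf]
  exact Finset.sum_congr rfl fun k _ => by rw [scov_comm]

theorem memLp_lincomb (hg2L2 : ∀ j, MemLp (fun z => g2 z j) 2 π) (u : Fin d → ℝ) :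
    MemLp (fun z => ∑ k, u k * g2 z k) 2 π :=
  memLp_finset_sum Finset.univ (fun k _ => (hg2L2 k).const_mul (u k))

theorem quad_entry (hg2L2 : ∀ j, MemLp (fun z => g2 z j) 2 π)
    (M : Matrix (Fin d) (Fin d) ℝ) (p q : Fin d) :
    (M * covMatrix π g2 g2 * Mᵀ) p q
      = scov π (fun z => ∑ k, M p k * g2 z k) (fun z => ∑ l, M q l * g2 z l) := by
  rw [scov_lincomb_left hg2L2 (M p) (memLp_lincomb hg2L2 (M q))]
  simp_rw [scov_lincomb_right hg2L2 (M q) (hg2L2 _)]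
  rw [Matrix.mul_apply]
  simp_rw [Matrix.mul_apply, Matrix.transpose_apply, Finset.sum_mul]
  rw [Finset.sum_comm]
  refine Finset.sum_congr rfl fun k _ => ?_
  rw [Finset.mul_sum]
  refine Finset.sum_congr rfl fun l _ => ?_
  rw [covMatrix_eq_scov]
  ring

theorem quad_trace_nonneg (hg2L2 : ∀ j, MemLp (fun z => g2 z j) 2 π)
    (M : Matrix (Fin d) (Fin d) ℝ) :
    0 ≤ (M * covMatrix π g2 g2 * Mᵀ).trace := by
  rw [Matrix.trace]
  refine Finset.sum_nonneg fun p _ => ?_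
  rw [Matrix.diag_apply, quad_entry hg2L2 M p p]
  exact scov_self_nonneg (memLp_lincomb hg2L2 (M p))
end quadform

section mainformula
variable {𝒵 : Type*} [MeasurableSpace 𝒵] (π : Measure 𝒵) [IsProbabilityMeasure π]
  {d : ℕ} {g1 g2 : 𝒵 → Fin d → ℝ} {m1 m2 : ℕ}

theorem covMatrix_gMFA_entry (hg1L2 : ∀ j, MemLp (fun z => g1 z j) 2 π)
    (hg2L2 : ∀ j, MemLp (fun z => g2 z j) 2 π)
    (hm1 : 0 < m1) (hm12 : m1 ≤ m2) (A : Matrix (Fin d) (Fin d) ℝ) (p q : Fin d) :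
    covMatrix (Measure.pi fun _ : Fin m2 => π)
        (gMFA g1 g2 m1 m2 A) (gMFA g1 g2 m1 m2 A) p q
      = (1 / m1) * scov π (fun z => g1 z p) (fun z => g1 z q)
        + (1 / m2 - 1 / m1) * (scov π (fun z => g1 z p) (fun z => ∑ k, A q k * g2 z k)
            + scov π (fun z => ∑ k, A p k * g2 z k) (fun z => g1 z q))
        + (1 / m1 - 1 / m2)
            * scov π (fun z => ∑ k, A p k * g2 z k) (fun z => ∑ k, A q k * g2 z k) := by
  set F : Fin m2 → 𝒵 → ℝ :=
    fun i z => coefA m1 i * g1 z p + coefB m1 i * ∑ k, A p k * g2 z k with hFdef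
  set G : Fin m2 → 𝒵 → ℝ :=
    fun i z => coefA m1 i * g1 z q + coefB m1 i * ∑ k, A q k * g2 z k with hGdef
  have hF : ∀ i, MemLp (F i) 2 π := fun i =>
    ((hg1L2 p).const_mul _).add ((memLp_lincomb hg2L2 (A p)).const_mul _)
  have hG : ∀ i, MemLp (G i) 2 π := fun i =>
    ((hg1L2 q).const_mul _).add ((memLp_lincomb hg2L2 (A q)).const_mul _)
  rw [covMatrix_eq_scov]
  rw [show (fun ω : Fin m2 → 𝒵 => gMFA g1 g2 m1 m2 A ω p) = fun ω => ∑ i, F i (ω i) from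
    funext fun ω => gMFA_apply g1 g2 m1 m2 A ω p]
  rw [show (fun ω : Fin m2 → 𝒵 => gMFA g1 g2 m1 m2 A ω q) = fun ω => ∑ i, G i (ω i) from
    funext fun ω => gMFA_apply g1 g2 m1 m2 A ω q]
  rw [scov_pi_sum π F G hF hG]
  have hterm : ∀ i : Fin m2, scov π (F i) (G i)
      = coefA m1 i * coefA m1 i * scov π (fun z => g1 z p) (fun z => g1 z q)
        + coefA m1 i * coefB m1 i
            * scov π (fun z => g1 z p) (fun z => ∑ k, A q k * g2 z k)
        + coefB m1 i * coefA m1 i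
            * scov π (fun z => ∑ k, A p k * g2 z k) (fun z => g1 z q)
        + coefB m1 i * coefB m1 i
            * scov π (fun z => ∑ k, A p k * g2 z k) (fun z => ∑ k, A q k * g2 z k) := by
    intro i
    exact scov_combo (coefA m1 i) (coefB m1 i) (coefA m1 i) (coefB m1 i)
      (hg1L2 p) (memLp_lincomb hg2L2 (A p)) (hg1L2 q) (memLp_lincomb hg2L2 (A q))
  simp_rw [hterm, Finset.sum_add_distrib, ← Finset.sum_mul]
  have hBA : ∑ i : Fin m2, coefB m1 i * coefA m1 i = 1 / m2 - 1 / m1 := by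
    simp_rw [mul_comm]; exact sum_coefAB hm1 hm12
  rw [sum_coefA_sq hm1 hm12, sum_coefAB hm1 hm12, hBA, sum_coefBB hm1 hm12]
  ring

theorem trace_covMatrix_gMFA (hg1L2 : ∀ j, MemLp (fun z => g1 z j) 2 π)
    (hg2L2 : ∀ j, MemLp (fun z => g2 z j) 2 π)
    (hm1 : 0 < m1) (hm12 : m1 ≤ m2) (A : Matrix (Fin d) (Fin d) ℝ) :
    (covMatrix (Measure.pi fun _ : Fin m2 => π)
        (gMFA g1 g2 m1 m2 A) (gMFA g1 g2 m1 m2 A)).trace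
      = (1 / m1) * (covMatrix π g1 g1).trace
        + (1 / m2 - 1 / m1) * ((covMatrix π g1 g2 * Aᵀ).trace
            + (A * covMatrix π g2 g1).trace)
        + (1 / m1 - 1 / m2) * (A * covMatrix π g2 g2 * Aᵀ).trace := by
  have h1 : ∀ p : Fin d, scov π (fun z => g1 z p) (fun z => ∑ k, A p k * g2 z k)
      = (covMatrix π g1 g2 * Aᵀ) p p := by
    intro p
    rw [scov_lincomb_right hg2L2 (A p) (hg1L2 p), Matrix.mul_apply]
    exact Finset.sum_congr rfl fun k _ => by
      rw [Matrix.transpose_apply, covMatrix_eq_scov]; ring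
  have h2 : ∀ p : Fin d, scov π (fun z => ∑ k, A p k * g2 z k) (fun z => g1 z p)
      = (A * covMatrix π g2 g1) p p := by
    intro p
    rw [scov_lincomb_left hg2L2 (A p) (hg1L2 p), Matrix.mul_apply]
    exact Finset.sum_congr rfl fun k _ => by rw [covMatrix_eq_scov]
  have etr : ∀ (M : Matrix (Fin d) (Fin d) ℝ), M.trace = ∑ p, M p p := fun M => rfl
  simp_rw [etr, covMatrix_gMFA_entry π hg1L2 hg2L2 hm1 hm12 A, h1, h2,
    ← quad_entry hg2L2 A]
  simp only [Finset.sum_add_distrib, ← Finset.mul_sum]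
  rfl
end mainformula

/-- Lemma 4, optimal matrix coefficient: with C₂₂ invertible,
A* = C₁₂ C₂₂⁻¹ minimizes the generalized variance Tr(Cov[ĝ^A_MF, ĝ^A_MF]) over all
matrix coefficients A. -/
theorem stmt_14 {𝒵 : Type*} [MeasurableSpace 𝒵] (π : Measure 𝒵) [IsProbabilityMeasure π]
    {d' : ℕ} (g1 g2 : 𝒵 → Fin d' → ℝ)
    (hg1m : ∀ j, Measurable fun z => g1 z j) (hg2m : ∀ j, Measurable fun z => g2 z j)
    (hg1L2 : ∀ j, MemLp (fun z => g1 z j) 2 π) (hg2L2 : ∀ j, MemLp (fun z => g2 z j) 2 π)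
    {m1 m2 : ℕ} (hm1 : 0 < m1) (hm12 : m1 ≤ m2)
    (hC22 : IsUnit (covMatrix π g2 g2).det)
    (Astar : Matrix (Fin d') (Fin d') ℝ)
    (hAstar : Astar = covMatrix π g1 g2 * (covMatrix π g2 g2)⁻¹) :
    ∀ A : Matrix (Fin d') (Fin d') ℝ,
      (covMatrix (Measure.pi fun _ : Fin m2 => π)
          (gMFA g1 g2 m1 m2 Astar) (gMFA g1 g2 m1 m2 Astar)).trace
        ≤ (covMatrix (Measure.pi fun _ : Fin m2 => π)
            (gMFA g1 g2 m1 m2 A) (gMFA g1 g2 m1 m2 A)).trace := by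
  intro A
  set C11 := covMatrix π g1 g1 with hC11def
  set C12 := covMatrix π g1 g2 with hC12def
  set C21 := covMatrix π g2 g1 with hC21def
  set C22 := covMatrix π g2 g2 with hC22def
  have hc : 0 ≤ 1 / (m1 : ℝ) - 1 / (m2 : ℝ) := by
    have h1 : (0:ℝ) < m1 := by exact_mod_cast hm1
    have hle : (m1:ℝ) ≤ m2 := by exact_mod_cast hm12
    have := one_div_le_one_div_of_le h1 hle
    linarith
  have h1 : Astar * C22 = C12 := by
    rw [hAstar, Matrix.mul_assoc, Matrix.nonsing_inv_mul _ hC22, Matrix.mul_one]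
  have hC12T : C12ᵀ = C21 := by
    ext i j
    show C12 j i = C21 i j
    simp only [hC12def, hC21def, covMatrix, Matrix.of_apply]
    have e : (fun z => g1 z j * g2 z i) = fun z => g2 z i * g1 z j :=
      funext fun z => mul_comm _ _
    rw [e, mul_comm]
  have hsym : C22ᵀ = C22 := by
    ext i j
    show C22 j i = C22 i j
    simp only [hC22def, covMatrix, Matrix.of_apply]
    have e : (fun z => g2 z j * g2 z i) = fun z => g2 z i * g2 z j :=
      funext fun z => mul_comm _ _
    rw [e, mul_comm]
  have h2 : C22 * Astarᵀ = C21 := by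
    rw [← hsym, ← Matrix.transpose_mul, h1, hC12T]
  set B := A - Astar with hBdef
  have hBexp : B * C22 * Bᵀ = A * C22 * Aᵀ - A * C21 - C12 * Aᵀ + Astar * C21 := by
    simp only [hBdef, Matrix.sub_mul, Matrix.mul_sub, Matrix.transpose_sub]
    rw [Matrix.mul_assoc A C22 Astarᵀ, h2, Matrix.mul_assoc Astar C22 Astarᵀ, h2, h1]
    abel
  have hq : 0 ≤ (B * C22 * Bᵀ).trace := quad_trace_nonneg hg2L2 B
  have htr : (A * C22 * Aᵀ).trace - (C12 * Aᵀ).trace - (A * C21).trace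
      = (B * C22 * Bᵀ).trace
        + ((Astar * C22 * Astarᵀ).trace - (C12 * Astarᵀ).trace - (Astar * C21).trace) := by
    have e1 : Astar * C22 * Astarᵀ = Astar * C21 := by rw [Matrix.mul_assoc, h2]
    have e2 : C12 * Astarᵀ = Astar * C21 := by rw [← h1, Matrix.mul_assoc, h2]
    rw [hBexp, e1, e2, Matrix.trace_add, Matrix.trace_sub, Matrix.trace_sub]
    ring
  have hY : (Astar * C22 * Astarᵀ).trace - (C12 * Astarᵀ).trace - (Astar * C21).trace
      ≤ (A * C22 * Aᵀ).trace - (C12 * Aᵀ).trace - (A * C21).trace := by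
    rw [htr]; linarith
  rw [trace_covMatrix_gMFA π hg1L2 hg2L2 hm1 hm12 A,
    trace_covMatrix_gMFA π hg1L2 hg2L2 hm1 hm12 Astar]
  have hE1 : (1 / (m2:ℝ) - 1 / m1) * ((C12 * Astarᵀ).trace + (Astar * C21).trace)
      + (1 / (m1:ℝ) - 1 / m2) * (Astar * C22 * Astarᵀ).trace
      = (1 / (m1:ℝ) - 1 / m2) * ((Astar * C22 * Astarᵀ).trace
          - (C12 * Astarᵀ).trace - (Astar * C21).trace) := by ring
  have hE2 : (1 / (m2:ℝ) - 1 / m1) * ((C12 * Aᵀ).trace + (A * C21).trace)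
      + (1 / (m1:ℝ) - 1 / m2) * (A * C22 * Aᵀ).trace
      = (1 / (m1:ℝ) - 1 / m2) * ((A * C22 * Aᵀ).trace
          - (C12 * Aᵀ).trace - (A * C21).trace) := by ring
  rw [add_assoc, add_assoc, hE1, hE2]
  exact add_le_add_right (mul_le_mul_of_nonneg_left hY hc) _
end
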